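/- arXiv:2205.00477 — 3 statements merged into one kernel-verified Lean document; each statement's English description precedes it below -/
import Mathlib

section
/- Let K be an n×n real symmetric positive semidefinite matrix, γ > 0 a real number such that I − γK is positive semidefinite (equivalently, every eigenvalue d of K satisfies γ·d ≤ 1), and t ≥ 1 a natural number. Then for every vector v ∈ ℝⁿ: vᵀ (I − γK)^t K (I − γK)^t v ≤ ‖v‖² / (2·e·γ·t), where e is Euler's number. -/
/-!
By the continuous functional calculus, `(1 - γK)^t K (1 - γK)^t = f(K)` with
`f(x) = x (1 - γx)^(2t)`, and `0 ≤ K`, `γK ≤ 1` put the spectrum of `K` in `[0, 1/γ]`.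
There `1 - γx ≤ exp(-γx)` and `y exp(-y) ≤ exp(-1)` give `f ≤ 1/(2eγt)`, hence
`f(K) ≤ 1/(2eγt)` in the Loewner order.
-/

open Matrix

lemma Real.mul_exp_neg_mul_le {s : ℝ} (hs : 0 < s) (x : ℝ) :
    x * exp (-(s * x)) ≤ 1 / (exp 1 * s) := by
  rw [div_mul_eq_div_div, le_div_iff₀ hs, one_div, ← exp_neg]
  calc x * exp (-(s * x)) * s = s * x * exp (-(s * x)) := by ring
    _ ≤ exp (-1) := mul_exp_neg_le_exp_neg_one (s * x)

lemma mul_one_sub_mul_pow_le {γ x : ℝ} (hγ : 0 < γ) (hx : 0 ≤ x) (hγx : γ * x ≤ 1)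
    {t : ℕ} (ht : 0 < t) :
    x * (1 - γ * x) ^ (2 * t) ≤ 1 / (2 * Real.exp 1 * γ * t) := by
  have hpow : (1 - γ * x) ^ (2 * t) ≤ Real.exp (-(2 * t * γ * x)) := by
    calc (1 - γ * x) ^ (2 * t) ≤ Real.exp (-(γ * x)) ^ (2 * t) :=
          pow_le_pow_left₀ (by linarith) (by linarith [Real.add_one_le_exp (-(γ * x))]) _
      _ = _ := by rw [← Real.exp_nat_mul]; push_cast; ring_nf
  calc x * (1 - γ * x) ^ (2 * t) ≤ x * Real.exp (-(2 * t * γ * x)) :=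
        mul_le_mul_of_nonneg_left hpow hx
    _ ≤ 1 / (Real.exp 1 * (2 * t * γ)) := Real.mul_exp_neg_mul_le (by positivity) x
    _ = _ := by ring

section CFC

variable {A : Type*} [Ring A] [StarRing A] [TopologicalSpace A] [Algebra ℝ A]
  [ContinuousFunctionalCalculus ℝ A IsSelfAdjoint]

lemma cfc_mul_one_sub_smul_pow {a : A} (ha : IsSelfAdjoint a) (γ : ℝ) (t : ℕ) :
    (1 - γ • a) ^ t * a * (1 - γ • a) ^ t = cfc (fun x ↦ x * (1 - γ * x) ^ (2 * t)) a := by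
  have h : cfc (fun x ↦ x * (1 - γ * x) ^ (2 * t)) a
      = cfc (fun x ↦ (1 - γ * x) ^ t * x * (1 - γ * x) ^ t) a :=
    cfc_congr fun x _ ↦ by ring
  rw [h, cfc_mul _ _ a, cfc_mul _ _ a, cfc_pow _ _ a, cfc_sub _ _ a, cfc_const_one ℝ a,
    cfc_const_mul_id γ a, cfc_id' ℝ a]

variable [PartialOrder A] [StarOrderedRing A] [NonnegSpectrumClass ℝ A]

lemma mul_le_one_of_smul_le_one_of_mem_spectrum {a : A} (ha : IsSelfAdjoint a) {γ : ℝ}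
    (h : γ • a ≤ 1) {x : ℝ} (hx : x ∈ spectrum ℝ a) : γ * x ≤ 1 := by
  rw [← cfc_const_mul_id γ a, cfc_le_one_iff (γ * ·) a] at h
  exact h x hx

lemma one_sub_smul_pow_mul_mul_pow_le {a : A} (ha : 0 ≤ a) {γ : ℝ} (hγ : 0 < γ)
    (h : γ • a ≤ 1) {t : ℕ} (ht : 0 < t) :
    (1 - γ • a) ^ t * a * (1 - γ • a) ^ t
      ≤ algebraMap ℝ A (1 / (2 * Real.exp 1 * γ * t)) := by
  have ha' : IsSelfAdjoint a := ha.isSelfAdjoint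
  rw [cfc_mul_one_sub_smul_pow ha']
  exact cfc_le_algebraMap _ _ a fun x hx ↦ mul_one_sub_mul_pow_le hγ
    (spectrum_nonneg_of_nonneg ha hx) (mul_le_one_of_smul_le_one_of_mem_spectrum ha' h hx)
    ht

end CFC

open scoped MatrixOrder

lemma Matrix.dotProduct_mulVec_le_of_le_smul_one {n : Type*} [Fintype n] [DecidableEq n]
    {A : Matrix n n ℝ} {c : ℝ} (h : A ≤ c • 1) (v : n → ℝ) :
    v ⬝ᵥ A *ᵥ v ≤ c * (v ⬝ᵥ v) := by
  have := (Matrix.le_iff.mp h).dotProduct_mulVec_nonneg v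
  simpa [sub_mulVec, smul_mulVec, dotProduct_smul] using this

/-- Quadratic-form spectral bound: for a symmetric PSD matrix `K` with `I - γK` PSD
and `t ≥ 1`, one has `vᵀ(I-γK)^t K (I-γK)^t v ≤ ‖v‖²/(2eγt)`. -/
theorem quadratic_form_spectral_bound {n : ℕ}
    (K : Matrix (Fin n) (Fin n) ℝ) (hK : K.PosSemidef)
    (γ : ℝ) (hγ : 0 < γ) (hI : (1 - γ • K).PosSemidef) (t : ℕ) (ht : 1 ≤ t) :
    ∀ v : Fin n → ℝ,
      v ⬝ᵥ (((1 - γ • K) ^ t * K * (1 - γ • K) ^ t).mulVec v)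
        ≤ (v ⬝ᵥ v) / (2 * Real.exp 1 * γ * t) := by
  intro v
  have hle := one_sub_smul_pow_mul_mul_pow_le hK.nonneg hγ (Matrix.le_iff.mpr hI) ht
  rw [Algebra.algebraMap_eq_smul_one] at hle
  calc v ⬝ᵥ ((1 - γ • K) ^ t * K * (1 - γ • K) ^ t) *ᵥ v
      ≤ 1 / (2 * Real.exp 1 * γ * t) * (v ⬝ᵥ v) := dotProduct_mulVec_le_of_le_smul_one hle v
    _ = (v ⬝ᵥ v) / (2 * Real.exp 1 * γ * t) := one_div_mul_eq_div _ _
end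

section
/- Let n ≥ 1 and let K be an n×n real symmetric positive definite matrix. For λ ≥ 0 define the empirical effective dimension N(λ) = Tr[K (K + λ n I)⁻¹]. Then for every real c with 0 < c < n there exists a unique λ > 0 such that N(λ) = c. -/
/-!
Diagonalising `K`, with eigenvalues `μᵢ > 0`, gives `N(λ) = ∑ᵢ μᵢ / (μᵢ + λn)` for `λ ≥ 0`.
This is continuous and strictly decreasing on `[0, ∞)`, equals `n` at `λ = 0` and tends to `0`
at infinity, so the intermediate value theorem gives the level `c` exactly once on `(0, ∞)`.
-/

open Matrix Filter Topology Set

/-- The empirical effective dimension `N(λ) = Tr[K(K + λnI)⁻¹]`. -/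
noncomputable def effDim {n : ℕ} (K : Matrix (Fin n) (Fin n) ℝ) (l : ℝ) : ℝ :=
  (K * (K + (l * n) • (1 : Matrix (Fin n) (Fin n) ℝ))⁻¹).trace

namespace Matrix.IsHermitian

variable {n 𝕜 : Type*} [RCLike 𝕜] [Fintype n] [DecidableEq n] {A : Matrix n n 𝕜}

lemma trace_cfc (hA : A.IsHermitian) (f : ℝ → ℝ) :
    (cfc f A).trace = ∑ i, (f (hA.eigenvalues i) : 𝕜) := by
  rw [cfc_eq hA, IsHermitian.cfc, Unitary.conjStarAlgAut_apply, trace_mul_cycle,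
    Unitary.coe_star_mul_self, one_mul, trace_diagonal]
  rfl

lemma add_smul_one_eq_cfc (hA : A.IsHermitian) (t : ℝ) :
    A + t • (1 : Matrix n n 𝕜) = cfc (fun x => x + t) A := by
  rw [cfc_add_const t (fun x => x) A, cfc_id' ℝ A, Algebra.algebraMap_eq_smul_one]

lemma inv_add_smul_one_eq_cfc (hA : A.IsHermitian) {t : ℝ}
    (ht : ∀ i, hA.eigenvalues i + t ≠ 0) :
    (A + t • (1 : Matrix n n 𝕜))⁻¹ = cfc (fun x => (x + t)⁻¹) A := by
  have hcont (f : ℝ → ℝ) : ContinuousOn f (spectrum ℝ A) := A.finite_real_spectrum.continuousOn f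
  apply inv_eq_left_inv
  rw [hA.add_smul_one_eq_cfc, ← cfc_mul _ _ _ (hcont _) (hcont _), ← cfc_one ℝ A]
  refine cfc_congr fun x hx => ?_
  obtain ⟨i, rfl⟩ := hA.spectrum_real_eq_range_eigenvalues ▸ hx
  exact inv_mul_cancel₀ (ht i)

lemma trace_mul_inv_add_smul_one (hA : A.IsHermitian) {t : ℝ}
    (ht : ∀ i, hA.eigenvalues i + t ≠ 0) :
    (A * (A + t • (1 : Matrix n n 𝕜))⁻¹).trace =
      ∑ i, ((hA.eigenvalues i / (hA.eigenvalues i + t) : ℝ) : 𝕜) := by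
  have hcont (f : ℝ → ℝ) : ContinuousOn f (spectrum ℝ A) := A.finite_real_spectrum.continuousOn f
  conv_lhs => enter [1, 1]; rw [← cfc_id' ℝ A]
  rw [hA.inv_add_smul_one_eq_cfc ht, ← cfc_mul _ _ _ (hcont _) (hcont _), hA.trace_cfc]
  rfl

end Matrix.IsHermitian

section SumDivAdd

variable {ι : Type*} [Fintype ι] {μ : ι → ℝ}

lemma continuousOn_sum_div_add (hμ : ∀ i, 0 < μ i) :
    ContinuousOn (fun t => ∑ i, μ i / (μ i + t)) (Ici 0) :=
  continuousOn_finsetSum _ fun i _ => continuousOn_const.div (by fun_prop)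
    fun t (ht : 0 ≤ t) => by linarith [hμ i]

lemma strictAntiOn_sum_div_add [Nonempty ι] (hμ : ∀ i, 0 < μ i) :
    StrictAntiOn (fun t => ∑ i, μ i / (μ i + t)) (Ici 0) :=
  fun s (hs : 0 ≤ s) t _ hst => Finset.sum_lt_sum_of_nonempty Finset.univ_nonempty
    fun i _ => div_lt_div_of_pos_left (hμ i) (by linarith [hμ i]) (by linarith)

lemma tendsto_sum_div_add_atTop :
    Tendsto (fun t => ∑ i, μ i / (μ i + t)) atTop (𝓝 0) := by
  simpa using tendsto_finsetSum Finset.univ fun i _ =>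
    tendsto_const_nhds (x := μ i).div_atTop (tendsto_atTop_add_const_left _ (μ i) tendsto_id)

end SumDivAdd

lemma StrictAntiOn.existsUnique_gt_eq {f : ℝ → ℝ} {a c : ℝ} (hf : ContinuousOn f (Ici a))
    (hanti : StrictAntiOn f (Ici a)) (ha : c < f a) (htop : ∀ᶠ t in atTop, f t < c) :
    ∃! t, a < t ∧ f t = c := by
  obtain ⟨b, hab, hb⟩ := ((eventually_ge_atTop a).and htop).exists
  obtain ⟨t, ht, rfl⟩ := intermediate_value_Icc' hab (hf.mono Icc_subset_Ici_self) ⟨hb.le, ha.le⟩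
  have hat : a < t := ht.1.lt_of_ne (by rintro rfl; exact ha.false)
  exact ⟨t, ⟨hat, rfl⟩, fun s ⟨has, hs⟩ => hanti.injOn has.le hat.le hs⟩

section EffDim

variable {n : ℕ} {K : Matrix (Fin n) (Fin n) ℝ}

lemma effDim_eq_sum_eigenvalues (hK : K.PosDef) {l : ℝ} (hl : 0 ≤ l) :
    effDim K l = ∑ i, hK.1.eigenvalues i / (hK.1.eigenvalues i + l * n) := by
  rw [effDim, hK.1.trace_mul_inv_add_smul_one fun i => by
    have := hK.eigenvalues_pos i; positivity]
  rfl

lemma effDim_zero (hK : K.PosDef) : effDim K 0 = n := by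
  simp [effDim_eq_sum_eigenvalues hK le_rfl, div_self (hK.eigenvalues_pos _).ne']

lemma continuousOn_effDim (hK : K.PosDef) : ContinuousOn (effDim K) (Ici 0) :=
  ((continuousOn_sum_div_add hK.eigenvalues_pos).comp (by fun_prop)
    fun l (hl : 0 ≤ l) => mul_nonneg hl n.cast_nonneg).congr
    fun _ hl => effDim_eq_sum_eigenvalues hK hl

lemma strictAntiOn_effDim (hK : K.PosDef) (hn : 0 < n) : StrictAntiOn (effDim K) (Ici 0) := by
  have : Nonempty (Fin n) := ⟨⟨0, hn⟩⟩
  have hn' : (0 : ℝ) < n := by exact_mod_cast hn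
  exact ((strictAntiOn_sum_div_add hK.eigenvalues_pos).comp_strictMonoOn
    ((strictMono_mul_right_of_pos hn').strictMonoOn _)
    fun l (hl : 0 ≤ l) => mul_nonneg hl hn'.le).congr
    fun _ hl => (effDim_eq_sum_eigenvalues hK hl).symm

lemma tendsto_effDim_atTop (hK : K.PosDef) (hn : 0 < n) : Tendsto (effDim K) atTop (𝓝 0) :=
  (tendsto_sum_div_add_atTop.comp (tendsto_id.atTop_mul_const (Nat.cast_pos.mpr hn))).congr'
    (by filter_upwards [eventually_ge_atTop 0] with l hl using
      (effDim_eq_sum_eigenvalues hK hl).symm)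

end EffDim

/-- For every level `0 < c < n` there is a unique `λ > 0` with `N(λ) = c`. -/
theorem effDim_exists_unique {n : ℕ} (hn : 1 ≤ n)
    (K : Matrix (Fin n) (Fin n) ℝ) (hK : K.PosDef)
    (c : ℝ) (hc0 : 0 < c) (hcn : c < n) :
    ∃! l : ℝ, 0 < l ∧ effDim K l = c :=
  (strictAntiOn_effDim hK hn).existsUnique_gt_eq (continuousOn_effDim hK)
    (by rwa [effDim_zero hK]) ((tendsto_effDim_atTop hK hn).eventually (gt_mem_nhds hc0))
end

section
/- Let s > 0, d ≥ 1, and x, x′ ∈ ℝ^d. Let ω = (ω₁, …, ω_d) be a random vector whose coordinates are independent, each with Gaussian distribution N(0, s) of mean 0 and variance s, and let b be uniformly distributed on [0, 2π], independent of ω. Then E[ 2·cos(⟨ω, x⟩ + b)·cos(⟨ω, x′⟩ + b) ] = exp(−s‖x − x′‖²/2). -/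
open MeasureTheory ProbabilityTheory Complex
open scoped NNReal

/-!
The product-to-sum formula gives `2 cos(A + b) cos(B + b) = cos(A - B) + cos(A + B + 2b)`; the
second term averages to zero over a uniform phase `b`, leaving `cos ⟨ω, x - x'⟩`.
This is the real part of `exp (i ⟨ω, x - x'⟩)`, whose Gaussian expectation factors over the
independent coordinates into values of the characteristic function `exp (-s t² / 2)` of `N(0, s)`.
-/

lemma isProbabilityMeasure_uniform_Icc {a b : ℝ} (hab : a < b) :
    IsProbabilityMeasure ((ENNReal.ofReal (b - a))⁻¹ • volume.restrict (Set.Icc a b)) := by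
  rw [← Real.volume_Icc]
  exact cond_isProbabilityMeasure_of_finite (by simpa using hab) measure_Icc_lt_top.ne

instance isProbabilityMeasure_uniform_Icc_zero_two_pi : IsProbabilityMeasure
    ((ENNReal.ofReal (2 * Real.pi))⁻¹ • volume.restrict (Set.Icc 0 (2 * Real.pi))) := by
  simpa using isProbabilityMeasure_uniform_Icc Real.two_pi_pos

lemma integral_cos_add_two_mul (c : ℝ) : ∫ t in (0)..2 * Real.pi, Real.cos (c + 2 * t) = 0 := by
  simp_rw [add_comm c]
  rw [intervalIntegral.integral_comp_mul_add Real.cos two_ne_zero, integral_cos,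
    show 2 * (2 * Real.pi) + c = c + 2 * Real.pi + 2 * Real.pi by ring]
  simp

lemma integral_two_mul_cos_add_mul_cos_add_uniform (A B : ℝ) :
    ∫ b, 2 * Real.cos (A + b) * Real.cos (B + b)
        ∂((ENNReal.ofReal (2 * Real.pi))⁻¹ • volume.restrict (Set.Icc 0 (2 * Real.pi)))
      = Real.cos (A - B) := by
  have hdouble : ∫ b, Real.cos (A + B + 2 * b)
      ∂((ENNReal.ofReal (2 * Real.pi))⁻¹ • volume.restrict (Set.Icc 0 (2 * Real.pi))) = 0 := by
    rw [integral_smul_measure, integral_Icc_eq_integral_Ioc,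
      ← intervalIntegral.integral_of_le Real.two_pi_pos.le, integral_cos_add_two_mul, smul_zero]
  simp_rw [Real.two_mul_cos_mul_cos, show ∀ b, A + b - (B + b) = A - B by intro; ring,
    show ∀ b, A + b + (B + b) = A + B + 2 * b by intro; ring]
  rw [integral_add (integrable_const _) ?_, hdouble, integral_const, probReal_univ, one_smul,
    add_zero]
  exact Integrable.of_bound (by fun_prop) 1 (ae_of_all _ fun b => Real.abs_cos_le_one _)

lemma integral_cexp_sum_mul_mul_I_pi_gaussianReal {ι : Type*} [Fintype ι] (v : ℝ≥0) (y : ι → ℝ) :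
    ∫ ω, cexp ((∑ i, ω i * y i : ℝ) * I) ∂(Measure.pi fun _ : ι => gaussianReal 0 v)
      = Real.exp (-(v * ∑ i, y i ^ 2) / 2) := by
  calc ∫ ω, cexp ((∑ i, ω i * y i : ℝ) * I) ∂(Measure.pi fun _ : ι => gaussianReal 0 v)
      = ∫ ω, ∏ i, cexp (y i * ω i * I) ∂(Measure.pi fun _ : ι => gaussianReal 0 v) := by
        simp_rw [← Complex.exp_sum, ← Finset.sum_mul, ofReal_sum, ofReal_mul, mul_comm]
    _ = ∏ i, charFun (gaussianReal 0 v) (y i) := by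
        simp_rw [charFun_apply_real]
        exact integral_fintype_prod_eq_prod (fun i (t : ℝ) => cexp (y i * t * I))
    _ = Real.exp (-(v * ∑ i, y i ^ 2) / 2) := by
        simp_rw [charFun_gaussianReal, ← Complex.exp_sum, ofReal_exp]
        push_cast
        simp [Finset.mul_sum, Finset.sum_div, neg_div]

lemma integral_cos_sum_mul_pi_gaussianReal {ι : Type*} [Fintype ι] (v : ℝ≥0) (y : ι → ℝ) :
    ∫ ω, Real.cos (∑ i, ω i * y i) ∂(Measure.pi fun _ : ι => gaussianReal 0 v)
      = Real.exp (-(v * ∑ i, y i ^ 2) / 2) := by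
  have hint : Integrable (fun ω : ι → ℝ => cexp ((∑ i, ω i * y i : ℝ) * I))
      (Measure.pi fun _ : ι => gaussianReal 0 v) :=
    Integrable.of_bound (by fun_prop : Continuous _).aestronglyMeasurable 1
      (ae_of_all _ fun ω => (norm_exp_ofReal_mul_I _).le)
  simp_rw [← exp_ofReal_mul_I_re]
  exact (integral_re hint).trans (by
    rw [integral_cexp_sum_mul_mul_I_pi_gaussianReal, RCLike.re_to_complex, ofReal_re])

lemma integrable_two_mul_cos_mul_cos {α : Type*} [MeasurableSpace α] {μ : Measure α}
    [IsFiniteMeasure μ] {f g : α → ℝ} (hf : Measurable f) (hg : Measurable g) :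
    Integrable (fun p => 2 * Real.cos (f p) * Real.cos (g p)) μ := by
  refine Integrable.of_bound (by fun_prop) 2 (ae_of_all _ fun p => ?_)
  rw [norm_mul, norm_mul, Real.norm_two, Real.norm_eq_abs, Real.norm_eq_abs, mul_assoc]
  have := mul_le_one₀ (Real.abs_cos_le_one (f p)) (abs_nonneg _) (Real.abs_cos_le_one (g p))
  linarith

theorem random_fourier_features_unbiased_general (d : ℕ) (s : ℝ) (hs : 0 < s)
    (x x' : Fin d → ℝ) :
    ∫ p : (Fin d → ℝ) × ℝ,
        2 * Real.cos ((∑ i, p.1 i * x i) + p.2) * Real.cos ((∑ i, p.1 i * x' i) + p.2)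
        ∂((Measure.pi fun _ : Fin d => gaussianReal 0 s.toNNReal).prod
            ((ENNReal.ofReal (2 * Real.pi))⁻¹ • volume.restrict (Set.Icc 0 (2 * Real.pi))))
      = Real.exp (-s * (∑ i, (x i - x' i) ^ 2) / 2) := by
  rw [integral_prod _ (integrable_two_mul_cos_mul_cos (by fun_prop) (by fun_prop))]
  simp_rw [integral_two_mul_cos_add_mul_cos_add_uniform, ← Finset.sum_sub_distrib, ← mul_sub]
  rw [integral_cos_sum_mul_pi_gaussianReal, Real.coe_toNNReal _ hs.le, neg_mul]

/-- Unbiasedness of random Fourier features for the Gaussian kernel: with `ω` having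
independent `N(0, s)` coordinates and `b` uniform on `[0, 2π]` independent of `ω`,
`E[2 cos(⟨ω,x⟩ + b) cos(⟨ω,x'⟩ + b)] = exp(-s‖x - x'‖²/2)`. -/
theorem random_fourier_features_unbiased (d : ℕ) (hd : 1 ≤ d) (s : ℝ) (hs : 0 < s)
    (x x' : Fin d → ℝ) :
    ∫ p : (Fin d → ℝ) × ℝ,
        2 * Real.cos ((∑ i, p.1 i * x i) + p.2) * Real.cos ((∑ i, p.1 i * x' i) + p.2)
        ∂((Measure.pi fun _ : Fin d => gaussianReal 0 s.toNNReal).prod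
            ((ENNReal.ofReal (2 * Real.pi))⁻¹ • volume.restrict (Set.Icc 0 (2 * Real.pi))))
      = Real.exp (-s * (∑ i, (x i - x' i) ^ 2) / 2) :=
  random_fourier_features_unbiased_general d s hs x x'
end
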